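/- Let f be a polynomial of degree at most d-1 over a field F with d = η^r, and recursively define for each sequence (b_1,...,b_ℓ) ∈ [0, cη-1]^ℓ the polynomial f^{(b_1,...,b_ℓ)} of degree at most d/η^ℓ - 1 with coefficients a_i^{(b_1,...,b_ℓ)} = Σ_{j=0}^{η-1} a_{j+iη}^{(b_1,...,b_{ℓ-1})} Z_j(α_{b_ℓ}), where a_i^{()} = a_i. Then for every ℓ ∈ [1, r], every (b_1,...,b_ℓ), and every x ∈ F: Σ_{s=0}^{η-1} x^s · f^{(b_1,...,b_{ℓ-1},s)}(x^η) = f^{(b_1,...,b_{ℓ-1})}(x), where for s ∈ [0, η-1], f^{(b_1,...,b_{ℓ-1},s)} is the polynomial with i-th coefficient a_{s+iη}^{(b_1,...,b_{ℓ-1})} (using Z_j(α_s) = δ_{js} for s < η). -/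
import Mathlib


/-- The Lagrange basis function `Z_j` on the nodes `α 0, …, α (η-1)`. -/
def lagrangeZ (F : Type*) [Field F] (η : ℕ) (α : ℕ → F) (j : ℕ) (β : F) : F :=
  ∏ k ∈ (Finset.range η).erase j, (β - α k) / (α j - α k)

/-- The recursively defined coefficients `a_i^{(b_1,…,b_ℓ)}`, where the list is
given with the most recent index `b_ℓ` at the head:
`a_i^{(b_1,…,b_ℓ)} = ∑_{j=0}^{η-1} a_{j+iη}^{(b_1,…,b_{ℓ-1})} · Z_j(α_{b_ℓ})`,
with `a_i^{()} = a i`. -/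
def coeffRec {F : Type*} [Field F] (a : ℕ → F) (η : ℕ) (α : ℕ → F) :
    List ℕ → ℕ → F
  | [], i => a i
  | b :: bs, i =>
      ∑ j ∈ Finset.range η, coeffRec a η α bs (j + i * η) * lagrangeZ F η α j (α b)

lemma lagrange_delta {F : Type*} [Field F] {η N : ℕ} (α : ℕ → F)
    (hα : Set.InjOn α (Set.Iio N)) (hηN : η ≤ N) {j s : ℕ} (hj : j < η) (hs : s < η) :
    lagrangeZ F η α j (α s) = if j = s then 1 else 0 := by
  have hne : ∀ k ∈ (Finset.range η).erase j, α j ≠ α k := by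
    intro k hk
    have hkj := Finset.ne_of_mem_erase hk
    have hkη := Finset.mem_range.mp (Finset.mem_of_mem_erase hk)
    exact fun h => hkj (hα (lt_of_lt_of_le hkη hηN) (lt_of_lt_of_le hj hηN) h.symm)
  by_cases hjs : j = s
  · subst hjs
    simp only [if_pos rfl, lagrangeZ]
    apply Finset.prod_eq_one
    intro k hk
    exact div_self (sub_ne_zero.mpr (hne k hk))
  · simp only [if_neg hjs, lagrangeZ]
    apply Finset.prod_eq_zero (i := s)
    · exact Finset.mem_erase.mpr ⟨fun h => hjs h.symm, Finset.mem_range.mpr hs⟩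
    · rw [sub_self, zero_div]

theorem stmt_12 (F : Type*) [Field F] (η r d N : ℕ) (hη : 2 ≤ η) (hr : 1 ≤ r)
    (hd : d = η ^ r) (c : ℝ) (hc : 1 < c) (hN : (N : ℝ) = c * η)
    (α : ℕ → F) (hα : Set.InjOn α (Set.Iio (N : ℕ)))
    (a : ℕ → F) :
    ∀ ℓ : ℕ, 1 ≤ ℓ → ℓ ≤ r →
      ∀ bs : List ℕ, bs.length = ℓ - 1 → (∀ b ∈ bs, b < N) →
        ∀ x : F,
          ∑ s ∈ Finset.range η, x ^ s *
              (∑ i ∈ Finset.range (d / η ^ ℓ),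
                coeffRec a η α (s :: bs) i * (x ^ η) ^ i) =
            ∑ i ∈ Finset.range (d / η ^ (ℓ - 1)), coeffRec a η α bs i * x ^ i := by
  intro ℓ hℓ1 hℓr bs hlen hbs x
  have hηN : η ≤ N := by
    have h1 : (η : ℝ) < N := by
      rw [hN]
      nlinarith [show (0:ℝ) < η by positivity]
    exact_mod_cast h1.le
  have hη0 : 0 < η := by omega
  set q := d / η ^ ℓ with hq
  have hqval : q = η ^ (r - ℓ) := by
    rw [hq, hd, Nat.pow_div hℓr hη0]
  have hsplit : d / η ^ (ℓ - 1) = η * q := by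
    rw [hd, Nat.pow_div (by omega) hη0, hqval, ← pow_succ']
    congr 1
    omega
  -- simplify the inner coefficient using the delta property
  have hcoeff : ∀ s < η, ∀ i, coeffRec a η α (s :: bs) i = coeffRec a η α bs (s + i * η) := by
    intro s hs i
    show (∑ j ∈ Finset.range η, coeffRec a η α bs (j + i * η) * lagrangeZ F η α j (α s)) = _
    rw [Finset.sum_eq_single s]
    · rw [lagrange_delta α hα hηN hs hs, if_pos rfl, mul_one]
    · intro j hj hjs
      rw [lagrange_delta α hα hηN (Finset.mem_range.mp hj) hs, if_neg hjs, mul_zero]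
    · intro h; exact absurd (Finset.mem_range.mpr hs) h
  rw [hsplit]
  have key : ∀ s ∈ Finset.range η,
      x ^ s * (∑ i ∈ Finset.range q, coeffRec a η α (s :: bs) i * (x ^ η) ^ i)
        = ∑ i ∈ Finset.range q, coeffRec a η α bs (s + i * η) * x ^ (s + i * η) := by
    intro s hs
    rw [Finset.mul_sum]
    refine Finset.sum_congr rfl fun i _ => ?_
    rw [hcoeff s (Finset.mem_range.mp hs) i, ← pow_mul, pow_add]
    ring
  rw [Finset.sum_congr rfl key]
  rw [← Finset.sum_product']
  refine Finset.sum_nbij' (fun p => p.1 + p.2 * η) (fun k => (k % η, k / η)) ?_ ?_ ?_ ?_ ?_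
  · rintro ⟨s, i⟩ hp
    simp only [Finset.mem_product, Finset.mem_range] at hp
    simp only [Finset.mem_range]
    calc s + i * η < η + i * η := by omega
      _ = (i + 1) * η := by ring
      _ ≤ q * η := Nat.mul_le_mul_right η (by omega)
      _ = η * q := Nat.mul_comm _ _
  · intro k hk
    simp only [Finset.mem_range] at hk
    simp only [Finset.mem_product, Finset.mem_range]
    exact ⟨Nat.mod_lt _ hη0, Nat.div_lt_of_lt_mul (by omega)⟩
  · rintro ⟨s, i⟩ hp
    simp only [Finset.mem_product, Finset.mem_range] at hp
    simp [Nat.add_mul_mod_self_right, Nat.add_mul_div_right _ _ hη0, Nat.mod_eq_of_lt hp.1,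
      Nat.div_eq_of_lt hp.1]
  · intro k _
    exact Nat.mod_add_div' k η
  · rintro ⟨s, i⟩ _
    rfl
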